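/- The function Υ(ρ) = (3 + 2ρ + 2ρ² + ρ³) sinh ρ − ρ(3 + 2ρ + ρ²) cosh ρ has exactly one zero ρ₀ in (0,∞); moreover Υ'(ρ) = (ρ − 2)(ρ(1+ρ) cosh ρ − (1+ρ+ρ²) sinh ρ), Υ'(ρ) > 0 for ρ ∈ (0,2), and Υ'(ρ) ≤ 0 for ρ ≥ 2. -/

import Mathlib

/-!
Υ(0) = 0 and Υ'(ρ) = (ρ − 2)·g(ρ) with g(ρ) = ρ(1+ρ) cosh ρ − (1+ρ+ρ²) sinh ρ. Multiplying g by
2e^ρ gives (1 + 2ρ + (2ρ)²/2) − e^{2ρ}, which is negative for ρ > 0 by the exponential series.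
So Υ increases strictly on [0, 2] (hence is positive on (0, 2]) and decreases strictly on [2, ∞);
since Υ(4) < 0, it has exactly one positive zero, which lies in (2, 4).
-/

noncomputable section

open Real Set

/-- `Υ(ρ) = (3 + 2ρ + 2ρ² + ρ³) sinh ρ − ρ(3 + 2ρ + ρ²) cosh ρ`. -/
def Upsilon (ρ : ℝ) : ℝ :=
  (3 + 2 * ρ + 2 * ρ ^ 2 + ρ ^ 3) * Real.sinh ρ - ρ * (3 + 2 * ρ + ρ ^ 2) * Real.cosh ρ

theorem existsUnique_pos_zero_of_strictMonoOn_of_strictAntiOn {f : ℝ → ℝ} {a b : ℝ}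
    (hf : ContinuousOn f (Ici 0)) (hmono : StrictMonoOn f (Icc 0 a))
    (hanti : StrictAntiOn f (Ici a)) (h0 : f 0 = 0) (ha : 0 < a) (hab : a ≤ b) (hb : f b < 0) :
    ∃! x : ℝ, x ∈ Ioi 0 ∧ f x = 0 := by
  have hpos : ∀ x ∈ Ioc 0 a, 0 < f x := fun x hx =>
    h0 ▸ hmono (left_mem_Icc.2 ha.le) (Ioc_subset_Icc_self hx) hx.1
  have hzero_gt : ∀ x ∈ Ioi 0, f x = 0 → a < x := fun x hx hfx => by
    by_contra! hxa
    exact (hpos x ⟨hx, hxa⟩).ne' hfx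
  obtain ⟨c, hc, hfc⟩ := intermediate_value_Icc' hab
    (hf.mono (Icc_subset_Ici_self.trans (Ici_subset_Ici.2 ha.le)))
    ⟨hb.le, (hpos a ⟨ha, le_rfl⟩).le⟩
  have hcpos : 0 < c := ha.trans_le hc.1
  exact ⟨c, ⟨hcpos, hfc⟩, fun x ⟨hx, hfx⟩ => hanti.injOn (hzero_gt x hx hfx).le
    (hzero_gt c hcpos hfc).le (hfx.trans hfc.symm)⟩

theorem quadratic_lt_exp_of_pos {x : ℝ} (hx : 0 < x) : 1 + x + x ^ 2 / 2 < exp x := by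
  have hsum : ∑ i ∈ Finset.range 4, x ^ i / (Nat.factorial i : ℝ) =
      1 + x + x ^ 2 / 2 + x ^ 3 / 6 := by
    simp [Finset.sum_range_succ, Nat.factorial]
  have hcubic : 0 < x ^ 3 / 6 := by positivity
  linarith [hsum ▸ sum_le_exp_of_nonneg hx.le 4]

theorem mul_cosh_lt_mul_sinh {x : ℝ} (hx : 0 < x) :
    x * (1 + x) * cosh x < (1 + x + x ^ 2) * sinh x := by
  have hexp := quadratic_lt_exp_of_pos (mul_pos two_pos hx)
  have hsq : exp (2 * x) = exp x * exp x := by rw [two_mul, exp_add]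
  have hinv : exp x * exp (-x) = 1 := by rw [← exp_add, add_neg_cancel, exp_zero]
  rw [cosh_eq, sinh_eq]
  nlinarith [exp_pos x, exp_pos (-x)]

theorem hasDerivAt_upsilon (ρ : ℝ) : HasDerivAt Upsilon
    ((ρ - 2) * (ρ * (1 + ρ) * cosh ρ - (1 + ρ + ρ ^ 2) * sinh ρ)) ρ := by
  have hcubic := ((((hasDerivAt_id' ρ).const_mul 2).const_add 3).add
    ((hasDerivAt_pow 2 ρ).const_mul 2)).add (hasDerivAt_pow 3 ρ)
  have hquad := (hasDerivAt_id' ρ).mul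
    ((((hasDerivAt_id' ρ).const_mul 2).const_add 3).add (hasDerivAt_pow 2 ρ))
  exact ((hcubic.mul (hasDerivAt_sinh ρ)).sub (hquad.mul (hasDerivAt_cosh ρ))).congr_deriv
    (by norm_num [Pi.add_apply, Pi.mul_apply]; ring)

theorem continuous_upsilon : Continuous Upsilon := by
  unfold Upsilon; fun_prop

theorem strictMonoOn_upsilon : StrictMonoOn Upsilon (Icc 0 2) := by
  refine strictMonoOn_of_hasDerivWithinAt_pos (convex_Icc 0 2) continuous_upsilon.continuousOn
    (fun x _ => (hasDerivAt_upsilon x).hasDerivWithinAt) fun x hx => ?_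
  rw [interior_Icc] at hx
  exact mul_pos_of_neg_of_neg (by linarith [hx.2]) (sub_neg.2 (mul_cosh_lt_mul_sinh hx.1))

theorem strictAntiOn_upsilon : StrictAntiOn Upsilon (Ici 2) := by
  refine strictAntiOn_of_hasDerivWithinAt_neg (convex_Ici 2) continuous_upsilon.continuousOn
    (fun x _ => (hasDerivAt_upsilon x).hasDerivWithinAt) fun x hx => ?_
  rw [interior_Ici] at hx
  exact mul_neg_of_pos_of_neg (sub_pos.2 hx)
    (sub_neg.2 (mul_cosh_lt_mul_sinh (two_pos.trans hx)))

theorem upsilon_zero : Upsilon 0 = 0 := by simp [Upsilon]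

theorem upsilon_four_neg : Upsilon 4 < 0 := by
  have hval : Upsilon 4 = 107 * sinh 4 - 108 * cosh 4 := by norm_num [Upsilon]
  linarith [sinh_lt_cosh 4, cosh_pos 4]

/-- `Υ` has exactly one zero in `(0,∞)`; its derivative is
`Υ'(ρ) = (ρ − 2)(ρ(1+ρ) cosh ρ − (1+ρ+ρ²) sinh ρ)`, which is positive on `(0,2)` and
nonpositive on `[2,∞)`. -/
theorem upsilon_unique_positive_zero :
    (∃! ρ : ℝ, ρ ∈ Set.Ioi (0 : ℝ) ∧ Upsilon ρ = 0) ∧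
    (∀ ρ : ℝ, HasDerivAt Upsilon
      ((ρ - 2) * (ρ * (1 + ρ) * Real.cosh ρ - (1 + ρ + ρ ^ 2) * Real.sinh ρ)) ρ) ∧
    (∀ ρ ∈ Set.Ioo (0 : ℝ) 2,
      0 < (ρ - 2) * (ρ * (1 + ρ) * Real.cosh ρ - (1 + ρ + ρ ^ 2) * Real.sinh ρ)) ∧
    (∀ ρ : ℝ, 2 ≤ ρ →
      (ρ - 2) * (ρ * (1 + ρ) * Real.cosh ρ - (1 + ρ + ρ ^ 2) * Real.sinh ρ) ≤ 0) := by
  refine ⟨existsUnique_pos_zero_of_strictMonoOn_of_strictAntiOn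
      continuous_upsilon.continuousOn strictMonoOn_upsilon strictAntiOn_upsilon upsilon_zero
      two_pos (by norm_num) upsilon_four_neg, hasDerivAt_upsilon, fun ρ hρ => ?_, fun ρ hρ => ?_⟩
  · exact mul_pos_of_neg_of_neg (by linarith [hρ.2]) (sub_neg.2 (mul_cosh_lt_mul_sinh hρ.1))
  · exact mul_nonpos_of_nonneg_of_nonpos (by linarith)
      (sub_neg.2 (mul_cosh_lt_mul_sinh (by linarith))).le
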